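/- For every set Γ of L-formulas and every L-formula φ: Γ ⊨_CS4 φ if and only if Γ ⊢_CS4 φ, where ⊨_CS4 denotes local semantic consequence on the class of CS4 frames. That is, CS4 is sound and strongly complete with respect to the class of CS4 frames. -/

import Mathlib

universe u

/-- Formulas of the intuitionistic modal language `L`, with a countably infinite
set of propositional variables indexed by `ℕ`. -/
inductive Fml : Type where
  | var : ℕ → Fml
  | bot : Fml
  | and : Fml → Fml → Fml
  | or : Fml → Fml → Fml
  | imp : Fml → Fml → Fml
  | dia : Fml → Fml
  | box : Fml → Fml
  deriving DecidableEq

/-- A birelational structure: a set of worlds, a set of fallible worlds, an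
intuitionistic relation `le` (`≼`), a modal relation `sq` (`⊑`) and a valuation. -/
structure KModel : Type (u + 1) where
  W : Type u
  fallible : Set W
  le : W → W → Prop
  sq : W → W → Prop
  val : ℕ → Set W

namespace KModel

/-- The satisfaction relation. -/
def Sat (M : KModel.{u}) : Fml → M.W → Prop
  | .var p, w => w ∈ M.val p
  | .bot, w => w ∈ M.fallible
  | .and φ ψ, w => Sat M φ w ∧ Sat M ψ w
  | .or φ ψ, w => Sat M φ w ∨ Sat M ψ w
  | .imp φ ψ, w => ∀ v, M.le w v → Sat M φ v → Sat M ψ v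
  | .dia φ, w => ∀ u, M.le w u → ∃ v, M.sq u v ∧ Sat M φ v
  | .box φ, w => ∀ u v, M.le w u → M.sq u v → Sat M φ v

/-- `M` is a bi-intuitionistic model: both relations are preorders, the set of
fallible worlds is closed under both relations, and the valuation is
`≼`-monotone and contains the fallible worlds. -/
def IsBiInt (M : KModel.{u}) : Prop :=
  (∀ w, M.le w w) ∧ (∀ u v w, M.le u v → M.le v w → M.le u w) ∧
  (∀ w, M.sq w w) ∧ (∀ u v w, M.sq u v → M.sq v w → M.sq u w) ∧
  (∀ w v, w ∈ M.fallible → M.le w v → v ∈ M.fallible) ∧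
  (∀ w v, w ∈ M.fallible → M.sq w v → v ∈ M.fallible) ∧
  (∀ p w v, w ∈ M.val p → M.le w v → v ∈ M.val p) ∧
  (∀ p w, w ∈ M.fallible → w ∈ M.val p)

/-- `⊑` is forth–up confluent for `≼`. -/
def ForthUp (M : KModel.{u}) : Prop :=
  ∀ w w' v, M.le w w' → M.sq w v → ∃ v', M.le v v' ∧ M.sq w' v'

/-- `⊑` is back–up confluent for `≼`. -/
def BackUp (M : KModel.{u}) : Prop :=
  ∀ w v v', M.sq w v → M.le v v' → ∃ w', M.le w w' ∧ M.sq w' v'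

/-- `⊑` is forth–down confluent for `≼`. -/
def ForthDown (M : KModel.{u}) : Prop :=
  ∀ w v v', M.le w v → M.sq v v' → ∃ w', M.sq w w' ∧ M.le w' v'

/-- `≼` is upward linear. -/
def UpLinear (M : KModel.{u}) : Prop :=
  ∀ w u v, M.le w u → M.le w v → M.le u v ∨ M.le v u

/-- There are no fallible worlds. -/
def Infallible (M : KModel.{u}) : Prop := M.fallible = ∅

/-- CS4 frames: back–up confluent bi-intuitionistic frames. -/
def IsCS4 (M : KModel.{u}) : Prop := M.IsBiInt ∧ M.BackUp

/-- IS4 frames: forth–up confluent infallible CS4 frames. -/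
def IsIS4 (M : KModel.{u}) : Prop := M.IsCS4 ∧ M.ForthUp ∧ M.Infallible

/-- GS4 frames: upward-linear IS4 frames. -/
def IsGS4 (M : KModel.{u}) : Prop := M.IsIS4 ∧ M.UpLinear

/-- GS4c frames: forth–down confluent GS4 frames. -/
def IsGS4c (M : KModel.{u}) : Prop := M.IsGS4 ∧ M.ForthDown

/-- S4I frames: forth–up and forth–down confluent infallible bi-intuitionistic frames. -/
def IsS4I (M : KModel.{u}) : Prop :=
  M.IsBiInt ∧ M.ForthUp ∧ M.ForthDown ∧ M.Infallible

end KModel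

/-- Hilbert-style derivability from intuitionistic propositional axiom schemes,
the S4 modal axiom schemes, an extra set `Ax` of axioms, modus ponens and
necessitation.  Since all axioms are given as schemes, the resulting set of
formulas is closed under substitution. -/
inductive Deriv (Ax : Fml → Prop) : Fml → Prop where
  | ax {φ} : Ax φ → Deriv Ax φ
  | then₁ (φ ψ : Fml) : Deriv Ax (φ.imp (ψ.imp φ))
  | then₂ (φ ψ χ : Fml) :
      Deriv Ax ((φ.imp (ψ.imp χ)).imp ((φ.imp ψ).imp (φ.imp χ)))
  | andE₁ (φ ψ : Fml) : Deriv Ax ((φ.and ψ).imp φ)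
  | andE₂ (φ ψ : Fml) : Deriv Ax ((φ.and ψ).imp ψ)
  | andI (φ ψ : Fml) : Deriv Ax (φ.imp (ψ.imp (φ.and ψ)))
  | orI₁ (φ ψ : Fml) : Deriv Ax (φ.imp (φ.or ψ))
  | orI₂ (φ ψ : Fml) : Deriv Ax (ψ.imp (φ.or ψ))
  | orE (φ ψ χ : Fml) :
      Deriv Ax ((φ.imp χ).imp ((ψ.imp χ).imp ((φ.or ψ).imp χ)))
  | exfalso (φ : Fml) : Deriv Ax (Fml.bot.imp φ)
  | kBox (φ ψ : Fml) : Deriv Ax (((φ.imp ψ).box).imp ((φ.box).imp (ψ.box)))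
  | kDia (φ ψ : Fml) : Deriv Ax (((φ.imp ψ).box).imp ((φ.dia).imp (ψ.dia)))
  | tBox (φ : Fml) : Deriv Ax ((φ.box).imp φ)
  | tDia (φ : Fml) : Deriv Ax (φ.imp (φ.dia))
  | fourBox (φ : Fml) : Deriv Ax ((φ.box).imp ((φ.box).box))
  | fourDia (φ : Fml) : Deriv Ax (((φ.dia).dia).imp (φ.dia))
  | mp {φ ψ} : Deriv Ax (φ.imp ψ) → Deriv Ax φ → Deriv Ax ψ
  | nec {φ} : Deriv Ax φ → Deriv Ax (φ.box)

/-- The axiom scheme DP: `◇(p∨q) → ◇p ∨ ◇q`. -/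
def AxDP (χ : Fml) : Prop :=
  ∃ φ ψ : Fml, χ = ((φ.or ψ).dia).imp ((φ.dia).or (ψ.dia))

/-- The axiom N: `¬◇⊥`, where `¬φ` abbreviates `φ → ⊥`. -/
def AxN (χ : Fml) : Prop := χ = (Fml.bot.dia).imp Fml.bot

/-- The axiom scheme FS2: `(◇p → □q) → □(p → q)`. -/
def AxFS2 (χ : Fml) : Prop :=
  ∃ φ ψ : Fml, χ = ((φ.dia).imp (ψ.box)).imp ((φ.imp ψ).box)

/-- The axiom scheme CD: `□(p∨q) → □p ∨ ◇q`. -/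
def AxCD (χ : Fml) : Prop :=
  ∃ φ ψ : Fml, χ = ((φ.or ψ).box).imp ((φ.box).or (ψ.dia))

/-- The axiom scheme GD: `(p→q) ∨ (q→p)`. -/
def AxGD (χ : Fml) : Prop :=
  ∃ φ ψ : Fml, χ = (φ.imp ψ).or (ψ.imp φ)

/-- The logic CS4. -/
def CS4 : Fml → Prop := Deriv (fun _ => False)

/-- The logic IS4 = CS4 + DP + N + FS2. -/
def IS4 : Fml → Prop := Deriv (fun χ => AxDP χ ∨ AxN χ ∨ AxFS2 χ)

/-- The logic S4I = CS4 + DP + N + CD. -/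
def S4I : Fml → Prop := Deriv (fun χ => AxDP χ ∨ AxN χ ∨ AxCD χ)

/-- The logic GS4 = IS4 + GD. -/
def GS4 : Fml → Prop := Deriv (fun χ => AxDP χ ∨ AxN χ ∨ AxFS2 χ ∨ AxGD χ)

/-- The logic GS4c = GS4 + CD. -/
def GS4c : Fml → Prop :=
  Deriv (fun χ => AxDP χ ∨ AxN χ ∨ AxFS2 χ ∨ AxGD χ ∨ AxCD χ)

/-- Conjunction of a finite list of formulas (the empty conjunction is `⊥ → ⊥`). -/
def conjList (l : List Fml) : Fml := l.foldr Fml.and (Fml.bot.imp Fml.bot)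

/-- Syntactic consequence: `Γ ⊢_Λ φ` iff `⋀Γ' → φ ∈ Λ` for some finite `Γ' ⊆ Γ`. -/
def SynConseq (L : Fml → Prop) (Γ : Set Fml) (φ : Fml) : Prop :=
  ∃ l : List Fml, (∀ ψ ∈ l, ψ ∈ Γ) ∧ L ((conjList l).imp φ)

/-- Local semantic consequence on the class of models satisfying `C`: at every
infallible world of every model of the class, if all formulas of `Γ` are
satisfied then so is `φ`. -/
def SemConseq (C : KModel.{u} → Prop) (Γ : Set Fml) (φ : Fml) : Prop :=
  ∀ M : KModel.{u}, C M → ∀ w : M.W, w ∉ M.fallible →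
    (∀ ψ ∈ Γ, M.Sat ψ w) → M.Sat φ w

/-!
Soundness is an induction on derivations; back–up confluence is needed only for `4□`.

Completeness goes through a canonical model whose worlds are pairs `(Θ, A)` of a prime
theory `Θ` (the fallible worlds are those with `⊥ ∈ Θ`) and a set `A` (`avoid`) of formulas
no disjunction of which is possible in `Θ`. Worlds are ordered by `Θ ⊆ Θ'`, and
`(Θ, A) ⊑ (Θ', A')` means that the boxed formulas of `Θ` hold in `Θ'` and `A ⊆ A'`. The
component `A` is what refutes `◇φ ∉ Θ`: the `≼`-successor `(Θ, {φ})` has no `⊑`-successor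
containing `φ`. Conversely, if `◇φ ∈ Θ`, a Lindenbaum extension of `{φ} ∪ □⁻¹Θ` avoiding all
`◇γ`, `γ` a disjunction of `A`, is a `⊑`-successor containing `φ`.
-/

variable {Ax : Fml → Prop}

namespace Deriv

theorem imp_self (φ : Fml) : Deriv Ax (φ.imp φ) :=
  mp (mp (then₂ φ (φ.imp φ) φ) (then₁ φ (φ.imp φ))) (then₁ φ φ)

theorem imp_intro {φ : Fml} (ψ : Fml) (h : Deriv Ax φ) : Deriv Ax (ψ.imp φ) :=
  mp (then₁ φ ψ) h

theorem imp_mp {φ ψ χ : Fml} (h₁ : Deriv Ax (φ.imp (ψ.imp χ))) (h₂ : Deriv Ax (φ.imp ψ)) :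
    Deriv Ax (φ.imp χ) :=
  mp (mp (then₂ φ ψ χ) h₁) h₂

theorem imp_trans {φ ψ χ : Fml} (h₁ : Deriv Ax (φ.imp ψ)) (h₂ : Deriv Ax (ψ.imp χ)) :
    Deriv Ax (φ.imp χ) :=
  imp_mp (imp_intro φ h₂) h₁

theorem imp_and {χ φ ψ : Fml} (h₁ : Deriv Ax (χ.imp φ)) (h₂ : Deriv Ax (χ.imp ψ)) :
    Deriv Ax (χ.imp (φ.and ψ)) :=
  imp_mp (imp_trans h₁ (andI φ ψ)) h₂

theorem or_imp {φ ψ χ : Fml} (h₁ : Deriv Ax (φ.imp χ)) (h₂ : Deriv Ax (ψ.imp χ)) :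
    Deriv Ax ((φ.or ψ).imp χ) :=
  mp (mp (orE φ ψ χ) h₁) h₂

theorem dia_mono {φ ψ : Fml} (h : Deriv Ax (φ.imp ψ)) : Deriv Ax (φ.dia.imp ψ.dia) :=
  mp (kDia φ ψ) (nec h)

theorem conjList_append_imp_left (l₁ l₂ : List Fml) :
    Deriv Ax ((conjList (l₁ ++ l₂)).imp (conjList l₁)) := by
  induction l₁ with
  | nil => exact imp_intro _ (exfalso _)
  | cons a t ih => exact imp_and (andE₁ _ _) (imp_trans (andE₂ _ _) ih)

theorem conjList_append_imp_right (l₁ l₂ : List Fml) :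
    Deriv Ax ((conjList (l₁ ++ l₂)).imp (conjList l₂)) := by
  induction l₁ with
  | nil => exact imp_self _
  | cons a t ih => exact imp_trans (andE₂ _ _) ih

end Deriv

inductive DerivFrom (Ax : Fml → Prop) (S : Set Fml) : Fml → Prop
  | prem {φ : Fml} : φ ∈ S → DerivFrom Ax S φ
  | thm {φ : Fml} : Deriv Ax φ → DerivFrom Ax S φ
  | mp {φ ψ : Fml} : DerivFrom Ax S (φ.imp ψ) → DerivFrom Ax S φ → DerivFrom Ax S ψ

namespace DerivFrom

variable {S S' : Set Fml} {φ ψ : Fml}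

theorem mono (h : DerivFrom Ax S φ) (hS : S ⊆ S') : DerivFrom Ax S' φ := by
  induction h with
  | prem h => exact prem (hS h)
  | thm h => exact thm h
  | mp _ _ ih₁ ih₂ => exact mp ih₁ ih₂

theorem mp_thm (h : Deriv Ax (φ.imp ψ)) (hφ : DerivFrom Ax S φ) : DerivFrom Ax S ψ :=
  mp (thm h) hφ

theorem deduction (h : DerivFrom Ax (insert φ S) ψ) : DerivFrom Ax S (φ.imp ψ) := by
  induction h with
  | prem h =>
    rcases h with rfl | h
    · exact thm (Deriv.imp_self _)
    · exact mp_thm (Deriv.then₁ _ _) (prem h)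
  | thm h => exact thm (Deriv.imp_intro _ h)
  | mp _ _ ih₁ ih₂ => exact mp (mp_thm (Deriv.then₂ _ _ _) ih₁) ih₂

theorem conjList_of_forall_mem {l : List Fml} (hl : ∀ ψ ∈ l, ψ ∈ S) :
    DerivFrom Ax S (conjList l) := by
  induction l with
  | nil => exact thm (Deriv.exfalso _)
  | cons a t ih =>
    exact mp (mp_thm (Deriv.andI _ _) (prem (hl a (by simp))))
      (ih fun ψ hψ => hl ψ (by simp [hψ]))

theorem exists_mem_of_sUnion {c : Set (Set Fml)} (hc : IsChain (· ⊆ ·) c) (hne : c.Nonempty)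
    (h : DerivFrom Ax (⋃₀ c) φ) : ∃ T ∈ c, DerivFrom Ax T φ := by
  induction h with
  | prem h =>
    obtain ⟨T, hT, hφ⟩ := h
    exact ⟨T, hT, prem hφ⟩
  | thm h => exact ⟨hne.some, hne.some_mem, thm h⟩
  | mp _ _ ih₁ ih₂ =>
    obtain ⟨T₁, hT₁, h₁⟩ := ih₁
    obtain ⟨T₂, hT₂, h₂⟩ := ih₂
    rcases hc.total hT₁ hT₂ with h | h
    · exact ⟨T₂, hT₂, mp (h₁.mono h) h₂⟩
    · exact ⟨T₁, hT₁, mp h₁ (h₂.mono h)⟩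

theorem box_of_preimage_box (h : DerivFrom Ax (Fml.box ⁻¹' S) φ) : DerivFrom Ax S φ.box := by
  induction h with
  | prem h => exact prem h
  | thm h => exact thm (Deriv.nec h)
  | mp _ _ ih₁ ih₂ => exact mp (mp_thm (Deriv.kBox _ _) ih₁) ih₂

theorem dia_imp_dia (h : DerivFrom Ax (insert φ (Fml.box ⁻¹' S)) ψ) :
    DerivFrom Ax S (φ.dia.imp ψ.dia) :=
  mp_thm (Deriv.kDia φ ψ) (box_of_preimage_box (deduction h))

end DerivFrom

theorem derivFrom_iff_synConseq {S : Set Fml} {φ : Fml} :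
    DerivFrom Ax S φ ↔ SynConseq (Deriv Ax) S φ := by
  constructor
  · intro h
    induction h with
    | @prem χ h => exact ⟨[χ], by simp [h], Deriv.andE₁ _ _⟩
    | thm h => exact ⟨[], by simp, Deriv.imp_intro _ h⟩
    | mp _ _ ih₁ ih₂ =>
      obtain ⟨l₁, hl₁, h₁⟩ := ih₁
      obtain ⟨l₂, hl₂, h₂⟩ := ih₂
      refine ⟨l₁ ++ l₂, fun ψ hψ => (List.mem_append.1 hψ).elim (hl₁ ψ) (hl₂ ψ), ?_⟩
      exact Deriv.imp_mp (Deriv.imp_trans (Deriv.conjList_append_imp_left l₁ l₂) h₁)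
        (Deriv.imp_trans (Deriv.conjList_append_imp_right l₁ l₂) h₂)
  · rintro ⟨l, hl, h⟩
    exact .mp_thm h (.conjList_of_forall_mem hl)

inductive IsDisjOf (D : Set Fml) : Fml → Prop
  | mem {φ : Fml} : φ ∈ D → IsDisjOf D φ
  | or {φ ψ : Fml} : IsDisjOf D φ → IsDisjOf D ψ → IsDisjOf D (φ.or ψ)

namespace IsDisjOf

theorem not_empty {φ : Fml} : ¬ IsDisjOf ∅ φ := by
  intro h
  induction h with
  | mem h => exact h
  | or _ _ ih _ => exact ih

theorem imp_of_singleton {φ ψ : Fml} (h : IsDisjOf {ψ} φ) : Deriv Ax (φ.imp ψ) := by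
  induction h with
  | mem h => rw [h]; exact Deriv.imp_self _
  | or _ _ ih₁ ih₂ => exact Deriv.or_imp ih₁ ih₂

theorem exists_imp_dia {A : Set Fml} {δ : Fml}
    (h : IsDisjOf (Fml.dia '' {γ | IsDisjOf A γ}) δ) :
    ∃ γ, IsDisjOf A γ ∧ Deriv Ax (δ.imp γ.dia) := by
  induction h with
  | mem h =>
    obtain ⟨γ, hγ, rfl⟩ := h
    exact ⟨γ, hγ, Deriv.imp_self _⟩
  | or _ _ ih₁ ih₂ =>
    obtain ⟨γ₁, hγ₁, h₁⟩ := ih₁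
    obtain ⟨γ₂, hγ₂, h₂⟩ := ih₂
    exact ⟨γ₁.or γ₂, hγ₁.or hγ₂,
      Deriv.or_imp (Deriv.imp_trans h₁ (Deriv.dia_mono (Deriv.orI₁ _ _)))
        (Deriv.imp_trans h₂ (Deriv.dia_mono (Deriv.orI₂ _ _)))⟩

end IsDisjOf

structure IsPrimeTheory (Ax : Fml → Prop) (T : Set Fml) : Prop where
  closed {φ : Fml} : DerivFrom Ax T φ → φ ∈ T
  prime {φ ψ : Fml} : φ.or ψ ∈ T → φ ∈ T ∨ ψ ∈ T

theorem IsPrimeTheory.mem_of_imp {T : Set Fml} {φ ψ : Fml} (hT : IsPrimeTheory Ax T)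
    (h : Deriv Ax (φ.imp ψ)) (hφ : φ ∈ T) : ψ ∈ T :=
  hT.closed (.mp_thm h (.prem hφ))

theorem lindenbaum {S D : Set Fml} (h : ∀ δ, IsDisjOf D δ → ¬ DerivFrom Ax S δ) :
    ∃ T, S ⊆ T ∧ IsPrimeTheory Ax T ∧ Disjoint T D := by
  let P : Set (Set Fml) := {T | ∀ δ, IsDisjOf D δ → ¬ DerivFrom Ax T δ}
  have chain_bound : ∀ c ⊆ P, IsChain (· ⊆ ·) c → c.Nonempty → ∃ ub ∈ P, ∀ T ∈ c, T ⊆ ub :=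
    fun c hcP hc hne => ⟨⋃₀ c, fun δ hδ hd => by
      obtain ⟨T, hT, hd⟩ := hd.exists_mem_of_sUnion hc hne
      exact hcP hT δ hδ hd, fun _ => Set.subset_sUnion_of_mem⟩
  obtain ⟨M, hSM, hMP, hMmax⟩ := zorn_subset_nonempty P chain_bound S h
  have derives_of_not_mem : ∀ χ ∉ M, ∃ δ, IsDisjOf D δ ∧ DerivFrom Ax (insert χ M) δ := by
    intro χ hχ
    by_contra! hP
    exact hχ (hMmax hP (Set.subset_insert χ M) (Set.mem_insert χ M))
  refine ⟨M, hSM, ⟨fun {χ} hχ => ?_, fun {α β} hαβ => ?_⟩,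
    Set.disjoint_left.2 fun a haM haD => hMP a (.mem haD) (.prem haM)⟩
  · by_contra hn
    obtain ⟨δ, hδ, hd⟩ := derives_of_not_mem χ hn
    exact hMP δ hδ (.mp hd.deduction hχ)
  · by_contra! hn
    obtain ⟨δ₁, hδ₁, hd₁⟩ := derives_of_not_mem α hn.1
    obtain ⟨δ₂, hδ₂, hd₂⟩ := derives_of_not_mem β hn.2
    exact hMP _ (hδ₁.or hδ₂) (.mp (.mp (.mp_thm (Deriv.orE α β _)
      (hd₁.mp_thm (Deriv.orI₁ _ _)).deduction) (hd₂.mp_thm (Deriv.orI₂ _ _)).deduction)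
      (.prem hαβ))

theorem exists_isPrimeTheory_not_mem {S : Set Fml} {φ : Fml} (h : ¬ DerivFrom Ax S φ) :
    ∃ T, S ⊆ T ∧ IsPrimeTheory Ax T ∧ φ ∉ T := by
  obtain ⟨T, hST, hT, hφT⟩ :=
    lindenbaum (D := {φ}) fun δ hδ hd => h (.mp_thm hδ.imp_of_singleton hd)
  exact ⟨T, hST, hT, Set.disjoint_singleton_right.1 hφT⟩

structure CanonicalWorld (Ax : Fml → Prop) where
  theory : Set Fml
  avoid : Set Fml
  isPrimeTheory : IsPrimeTheory Ax theory
  dia_not_mem : ∀ γ, IsDisjOf avoid γ → γ.dia ∉ theory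

namespace CanonicalWorld

def ofIsPrimeTheory {T : Set Fml} (hT : IsPrimeTheory Ax T) : CanonicalWorld Ax :=
  ⟨T, ∅, hT, fun _ hγ => absurd hγ IsDisjOf.not_empty⟩

def ofDiaNotMem {T : Set Fml} (hT : IsPrimeTheory Ax T) {φ : Fml} (hφ : φ.dia ∉ T) :
    CanonicalWorld Ax :=
  ⟨T, {φ}, hT, fun _ hγ hγT => hφ (hT.mem_of_imp (Deriv.dia_mono hγ.imp_of_singleton) hγT)⟩

theorem exists_sq_of_dia_mem (u : CanonicalWorld Ax) {φ : Fml} (hφ : φ.dia ∈ u.theory) :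
    ∃ v : CanonicalWorld Ax,
      Fml.box ⁻¹' u.theory ⊆ v.theory ∧ u.avoid ⊆ v.avoid ∧ φ ∈ v.theory := by
  have hcons : ∀ δ, IsDisjOf (Fml.dia '' {γ | IsDisjOf u.avoid γ}) δ →
      ¬ DerivFrom Ax (insert φ (Fml.box ⁻¹' u.theory)) δ := by
    intro δ hδ hd
    obtain ⟨γ, hγ, hδγ⟩ := hδ.exists_imp_dia (Ax := Ax)
    have hγγ : γ.dia.dia ∈ u.theory :=
      u.isPrimeTheory.closed (.mp (hd.mp_thm hδγ).dia_imp_dia (.prem hφ))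
    exact u.dia_not_mem γ hγ (u.isPrimeTheory.mem_of_imp (Deriv.fourDia γ) hγγ)
  obtain ⟨T, hsub, hT, hdisj⟩ := lindenbaum hcons
  refine ⟨⟨T, u.avoid, hT, fun γ hγ hγT => ?_⟩,
    fun χ hχ => hsub (Set.mem_insert_of_mem φ hχ), subset_rfl, hsub (Set.mem_insert φ _)⟩
  exact Set.disjoint_left.1 hdisj hγT ⟨γ, hγ, rfl⟩

end CanonicalWorld

def canonicalModel (Ax : Fml → Prop) : KModel.{u} where
  W := ULift.{u} (CanonicalWorld Ax)
  fallible := {w | Fml.bot ∈ w.down.theory}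
  le w v := w.down.theory ⊆ v.down.theory
  sq w v := Fml.box ⁻¹' w.down.theory ⊆ v.down.theory ∧ w.down.avoid ⊆ v.down.avoid
  val p := {w | Fml.var p ∈ w.down.theory}

theorem canonicalModel_isBiInt : (canonicalModel.{u} Ax).IsBiInt := by
  refine ⟨fun _ => subset_rfl, fun _ _ _ h₁ h₂ => h₁.trans h₂, fun w => ⟨?_, subset_rfl⟩,
    fun u _ _ h₁ h₂ => ⟨?_, h₁.2.trans h₂.2⟩, fun _ _ hw hle => hle hw, fun w _ hw hsq => ?_,
    fun _ _ _ hw hle => hle hw, fun _ w hw => ?_⟩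
  · exact fun χ hχ => w.down.isPrimeTheory.mem_of_imp (Deriv.tBox χ) hχ
  · exact fun χ hχ => h₂.1 (h₁.1 (u.down.isPrimeTheory.mem_of_imp (Deriv.fourBox χ) hχ))
  · exact hsq.1 (w.down.isPrimeTheory.mem_of_imp (Deriv.exfalso _) hw)
  · exact w.down.isPrimeTheory.mem_of_imp (Deriv.exfalso _) hw

theorem canonicalModel_backUp : (canonicalModel.{u} Ax).BackUp :=
  fun w _ _ hsq hle =>
    ⟨⟨.ofIsPrimeTheory w.down.isPrimeTheory⟩, subset_rfl, hsq.1.trans hle, Set.empty_subset _⟩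

theorem sat_canonicalModel_iff (φ : Fml) (w : (canonicalModel.{u} Ax).W) :
    (canonicalModel.{u} Ax).Sat φ w ↔ φ ∈ w.down.theory := by
  induction φ generalizing w with
  | var | bot => rfl
  | and φ ψ ihφ ihψ =>
    have hw := w.down.isPrimeTheory
    refine ((ihφ w).and (ihψ w)).trans ⟨fun ⟨h₁, h₂⟩ => ?_, fun h => ?_⟩
    · exact hw.closed (.mp (.mp_thm (Deriv.andI φ ψ) (.prem h₁)) (.prem h₂))
    · exact ⟨hw.mem_of_imp (Deriv.andE₁ φ ψ) h, hw.mem_of_imp (Deriv.andE₂ φ ψ) h⟩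
  | or φ ψ ihφ ihψ =>
    have hw := w.down.isPrimeTheory
    refine ((ihφ w).or (ihψ w)).trans ⟨fun h => ?_, hw.prime⟩
    exact h.elim (hw.mem_of_imp (Deriv.orI₁ φ ψ)) (hw.mem_of_imp (Deriv.orI₂ φ ψ))
  | imp φ ψ ihφ ihψ =>
    refine ⟨fun hsat => ?_, fun h v hle hφ => ?_⟩
    · by_contra hn
      obtain ⟨T, hsub, hT, hψT⟩ :=
        exists_isPrimeTheory_not_mem fun hd => hn (w.down.isPrimeTheory.closed hd.deduction)
      let v : (canonicalModel.{u} Ax).W := ⟨.ofIsPrimeTheory hT⟩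
      have hφv : (canonicalModel.{u} Ax).Sat φ v := (ihφ v).2 (hsub (Set.mem_insert φ _))
      exact hψT ((ihψ v).1 (hsat v (fun χ hχ => hsub (Set.mem_insert_of_mem φ hχ)) hφv))
    · exact (ihψ v).2 (v.down.isPrimeTheory.closed (.mp (.prem (hle h)) (.prem ((ihφ v).1 hφ))))
  | dia φ ih =>
    refine ⟨fun hsat => ?_, fun h u hle => ?_⟩
    · by_contra hn
      obtain ⟨v, hsq, hφv⟩ := hsat ⟨.ofDiaNotMem w.down.isPrimeTheory hn⟩ subset_rfl
      exact v.down.dia_not_mem φ (.mem (hsq.2 rfl))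
        (v.down.isPrimeTheory.mem_of_imp (Deriv.tDia φ) ((ih v).1 hφv))
    · obtain ⟨v, hbox, havoid, hφv⟩ := u.down.exists_sq_of_dia_mem (hle h)
      exact ⟨⟨v⟩, ⟨hbox, havoid⟩, (ih ⟨v⟩).2 hφv⟩
  | box φ ih =>
    refine ⟨fun hsat => ?_, fun h u v hle hsq => (ih v).2 (hsq.1 (hle h))⟩
    by_contra hn
    have hw := w.down.isPrimeTheory
    obtain ⟨T, hsub, hT, hφT⟩ :=
      exists_isPrimeTheory_not_mem fun hd => hn (hw.closed hd.box_of_preimage_box)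
    exact hφT ((ih ⟨.ofIsPrimeTheory hT⟩).1
      (hsat ⟨.ofIsPrimeTheory hw⟩ ⟨.ofIsPrimeTheory hT⟩ subset_rfl ⟨hsub, subset_rfl⟩))

theorem synConseq_of_semConseq {Γ : Set Fml} {φ : Fml}
    (h : SemConseq.{u} KModel.IsCS4 Γ φ) : SynConseq (Deriv Ax) Γ φ := by
  rw [← derivFrom_iff_synConseq]
  by_contra hn
  obtain ⟨T, hΓT, hT, hφT⟩ := exists_isPrimeTheory_not_mem hn
  let w : (canonicalModel.{u} Ax).W := ⟨.ofIsPrimeTheory hT⟩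
  have hw : w ∉ (canonicalModel.{u} Ax).fallible :=
    fun hbot => hφT (hT.mem_of_imp (Deriv.exfalso φ) hbot)
  have hΓw : ∀ ψ ∈ Γ, (canonicalModel.{u} Ax).Sat ψ w :=
    fun ψ hψ => (sat_canonicalModel_iff ψ w).2 (hΓT hψ)
  exact hφT ((sat_canonicalModel_iff φ w).1
    (h _ ⟨canonicalModel_isBiInt, canonicalModel_backUp⟩ w hw hΓw))

namespace KModel

variable {M : KModel.{u}}

theorem IsBiInt.sat_mono (hM : M.IsBiInt) (φ : Fml) {w v : M.W} (hwv : M.le w v)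
    (h : M.Sat φ w) : M.Sat φ v := by
  obtain ⟨-, le_trans, -, -, fallible_le, -, val_le, -⟩ := hM
  induction φ generalizing w v with
  | var p => exact val_le p w v h hwv
  | bot => exact fallible_le w v h hwv
  | and φ ψ ihφ ihψ => exact ⟨ihφ hwv h.1, ihψ hwv h.2⟩
  | or φ ψ ihφ ihψ => exact h.imp (ihφ hwv) (ihψ hwv)
  | imp => exact fun u hvu => h u (le_trans w v u hwv hvu)
  | dia => exact fun u hvu => h u (le_trans w v u hwv hvu)
  | box => exact fun u x hvu => h u x (le_trans w v u hwv hvu)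

theorem IsBiInt.sat_of_mem_fallible (hM : M.IsBiInt) (φ : Fml) {w : M.W}
    (hw : w ∈ M.fallible) : M.Sat φ w := by
  obtain ⟨-, -, sq_refl, -, fallible_le, fallible_sq, -, fallible_val⟩ := hM
  induction φ generalizing w with
  | var p => exact fallible_val p w hw
  | bot => exact hw
  | and φ ψ ihφ ihψ => exact ⟨ihφ hw, ihψ hw⟩
  | or φ ψ ihφ _ => exact Or.inl (ihφ hw)
  | imp φ ψ _ ihψ => exact fun v hv _ => ihψ (fallible_le w v hw hv)
  | dia φ ih => exact fun u hu => ⟨u, sq_refl u, ih (fallible_le w u hw hu)⟩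
  | box φ ih => exact fun u v hu hv => ih (fallible_sq u v (fallible_le w u hw hu) hv)

theorem IsCS4.sat_of_deriv (hM : M.IsCS4) (hAx : ∀ ψ, Ax ψ → ∀ w, M.Sat ψ w) {φ : Fml}
    (h : Deriv Ax φ) (w : M.W) : M.Sat φ w := by
  have hBi := hM.1
  obtain ⟨⟨le_refl, le_trans, sq_refl, sq_trans, -, -, -, -⟩, back_up⟩ := hM
  induction h generalizing w with
  | ax h => exact hAx _ h w
  | then₁ φ ψ => exact fun v _ hφ u hu _ => hBi.sat_mono φ hu hφ
  | then₂ φ ψ χ =>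
    exact fun a _ h₁ b hb h₂ c hc h₃ =>
      h₁ c (le_trans _ _ _ hb hc) h₃ c (le_refl c) (h₂ c hc h₃)
  | andE₁ φ ψ => exact fun v _ h => h.1
  | andE₂ φ ψ => exact fun v _ h => h.2
  | andI φ ψ => exact fun v _ h₁ u hu h₂ => ⟨hBi.sat_mono φ hu h₁, h₂⟩
  | orI₁ φ ψ => exact fun v _ h => Or.inl h
  | orI₂ φ ψ => exact fun v _ h => Or.inr h
  | orE φ ψ χ =>
    exact fun a _ h₁ b hb h₂ c hc h₃ =>
      h₃.elim (h₁ c (le_trans _ _ _ hb hc)) (h₂ c hc)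
  | exfalso φ => exact fun v _ h => hBi.sat_of_mem_fallible φ h
  | kBox φ ψ =>
    exact fun a _ h₁ b hb h₂ u v hu hv =>
      h₁ u v (le_trans _ _ _ hb hu) hv v (le_refl v) (h₂ u v hu hv)
  | kDia φ ψ =>
    intro a _ h₁ b hb h₂ u hu
    obtain ⟨v, hv, hφ⟩ := h₂ u hu
    exact ⟨v, hv, h₁ u v (le_trans _ _ _ hb hu) hv v (le_refl v) hφ⟩
  | tBox φ => exact fun v _ h => h v v (le_refl v) (sq_refl v)
  | tDia φ => exact fun v _ h u hu => ⟨u, sq_refl u, hBi.sat_mono φ hu h⟩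
  | fourBox φ =>
    intro a _ h u v hu hv u' v' hu' hv'
    obtain ⟨y, hy, hyu'⟩ := back_up u v u' hv hu'
    exact h y v' (le_trans _ _ _ hu hy) (sq_trans _ _ _ hyu' hv')
  | fourDia φ =>
    intro v _ h u hu
    obtain ⟨x, hx, hdx⟩ := h u hu
    obtain ⟨y, hy, hφ⟩ := hdx x (le_refl x)
    exact ⟨y, sq_trans _ _ _ hx hy, hφ⟩
  | mp _ _ ih₁ ih₂ => exact ih₁ w w (le_refl w) (ih₂ w)
  | nec _ ih => exact fun u v _ _ => ih v

theorem sat_conjList {w : M.W} {l : List Fml} (h : ∀ ψ ∈ l, M.Sat ψ w) :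
    M.Sat (conjList l) w := by
  induction l with
  | nil => exact fun _ _ hv => hv
  | cons a t ih => exact ⟨h a (by simp), ih fun ψ hψ => h ψ (by simp [hψ])⟩

end KModel

theorem semConseq_of_synConseq {Γ : Set Fml} {φ : Fml} (h : SynConseq CS4 Γ φ) :
    SemConseq.{u} KModel.IsCS4 Γ φ := by
  obtain ⟨l, hl, hd⟩ := h
  intro M hM w _ hΓ
  exact hM.sat_of_deriv (fun _ h => h.elim) hd w w (hM.1.1 w)
    (KModel.sat_conjList fun ψ hψ => hΓ ψ (hl ψ hψ))

/-- **Soundness and strong completeness of CS4.** For every set `Γ` of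
`L`-formulas and every `L`-formula `φ`: `Γ ⊨_CS4 φ` if and only if `Γ ⊢_CS4 φ`,
where `⊨_CS4` is local semantic consequence on the class of CS4 frames. -/
theorem cs4_soundness_strong_completeness (Γ : Set Fml) (φ : Fml) :
    SemConseq.{u} KModel.IsCS4 Γ φ ↔ SynConseq CS4 Γ φ :=
  ⟨synConseq_of_semConseq, semConseq_of_synConseq⟩
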